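/- Approximate eigenvector property: let X be a d-partite (q,γ)-product and M = ∑_{T⊆[d]} α_T E_T with α ∈ ℝ^{2^{[d]}}. Then for any f and S ⊆ [d], ‖M f^{=S} − λ_S f^{=S}‖_q ≤ |α|₁ · 2^{O(d)} γ ‖f‖_q, where λ_S = ∑_{T ⊇ S} α_T and |α|₁ = ∑_T |α_T|. -/

import Mathlib

/-!
Pick `j ∈ S \ T` and write `f^{=S}` as a signed sum, over `U ⊆ S \ {j}`, of the differences
`g_U = E_{U ∪ {j}} f - E_U f`. Each `g_U` depends only on `U ∪ {j}` and satisfies `E_U g_U = 0`,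
so `‖E_T g_U‖ ≤ ‖E_{T ∪ U} g_U - E_U g_U‖`. Adding the coordinates of `T` one at a time, a single
step `E_{R ∪ {i}} g - E_R g` is, in each link of `R`, the bipartite walk from colour `j` to
colour `i` minus its mean, applied to a function of colour `j`; the `(q,γ)`-product hypothesis
bounds it by `γ ‖g‖_q`. When `S ⊆ T`, `E_T` fixes `f^{=S}` because `f^{=S}` depends only on `S`.
-/

open Finset BigOperators

/-- Conditional expectation operator `E_T` on a `d`-partite space:
`E_T f (x) = E[f(y) | y_T = x_T]` under the (finitely supported) measure `μ`. -/
noncomputable def projE {d : ℕ} {Ω : Type} [Fintype Ω] [DecidableEq Ω]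
    (μ : (Fin d → Ω) → ℝ) (T : Finset (Fin d))
    (f : (Fin d → Ω) → ℝ) (x : Fin d → Ω) : ℝ :=
  (∑ y : Fin d → Ω, if ∀ i ∈ T, y i = x i then μ y * f y else 0) /
  (∑ y : Fin d → Ω, if ∀ i ∈ T, y i = x i then μ y else 0)

/-- Efron–Stein component `f^{=S} = ∑_{T ⊆ S} (-1)^{|S|-|T|} E_T f`. -/
noncomputable def esComp {d : ℕ} {Ω : Type} [Fintype Ω] [DecidableEq Ω]
    (μ : (Fin d → Ω) → ℝ) (S : Finset (Fin d))
    (f : (Fin d → Ω) → ℝ) : (Fin d → Ω) → ℝ :=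
  fun x => ∑ T ∈ S.powerset, (-1 : ℝ) ^ (S.card - T.card) * projE μ T f x

/-- `L^q` norm with respect to the probability mass function `μ`. -/
noncomputable def pnorm {α : Type} [Fintype α] (μ : α → ℝ) (q : ℝ) (f : α → ℝ) : ℝ :=
  (∑ x, μ x * |f x| ^ q) ^ (1 / q)

/-- Conditional (link) measure obtained from `μ` by conditioning the coordinates
in `R` to agree with `z`. -/
noncomputable def condMeasure {d : ℕ} {Ω : Type} [Fintype Ω] [DecidableEq Ω]
    (μ : (Fin d → Ω) → ℝ) (R : Finset (Fin d)) (z : Fin d → Ω) :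
    (Fin d → Ω) → ℝ :=
  fun y => (if ∀ i ∈ R, y i = z i then μ y else 0) /
    (∑ y' : Fin d → Ω, if ∀ i ∈ R, y' i = z i then μ y' else 0)

/-- Expectation with respect to the mass function `μ`. -/
noncomputable def expect {α : Type} [Fintype α] (μ : α → ℝ) (f : α → ℝ) : ℝ :=
  ∑ x, μ x * f x

/-- `X` is a `(q,γ)`-product: in every link of codimension at least `2`
(conditioning the coordinates in `R` on `z`), for every pair of distinct colors
`i, j ∉ R`, the bipartite walk from color `i` to color `j` is a `q`-norm
expander: `‖A^τ_{i,j} g − Π^τ_{i,j} g‖_q ≤ γ ‖g‖_q` for every function `g` of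
the `i`-th coordinate. -/
def IsQGammaProduct {d : ℕ} {Ω : Type} [Fintype Ω] [DecidableEq Ω]
    (μ : (Fin d → Ω) → ℝ) (q γ : ℝ) : Prop :=
  ∀ (R : Finset (Fin d)) (z : Fin d → Ω), R.card + 2 ≤ d →
    ∀ i j : Fin d, i ∉ R → j ∉ R → i ≠ j →
      ∀ g : (Fin d → Ω) → ℝ, (∀ x y, x i = y i → g x = g y) →
        pnorm (condMeasure μ R z) q
            (fun x => projE (condMeasure μ R z) {j} g x - expect (condMeasure μ R z) g)
          ≤ γ * pnorm (condMeasure μ R z) q g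

section WeightedNorm

variable {α : Type} [Fintype α] {ν : α → ℝ} {q : ℝ} {f g : α → ℝ}

lemma expect_congr_of_ne_zero (h : ∀ x, ν x ≠ 0 → f x = g x) : expect ν f = expect ν g :=
  Finset.sum_congr rfl fun x _ => by
    by_cases hx : ν x = 0
    · simp [hx]
    · rw [h x hx]

lemma expect_mono_of_ne_zero (hν : ∀ x, 0 ≤ ν x) (h : ∀ x, ν x ≠ 0 → f x ≤ g x) :
    expect ν f ≤ expect ν g :=
  Finset.sum_le_sum fun x _ => by
    by_cases hx : ν x = 0
    · simp [hx]
    · exact mul_le_mul_of_nonneg_left (h x hx) (hν x)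

lemma expect_const_mul (c : ℝ) (f : α → ℝ) : expect ν (fun x => c * f x) = c * expect ν f := by
  simp only [_root_.expect, Finset.mul_sum]
  exact Finset.sum_congr rfl fun x _ => by ring

lemma abs_expect_rpow_le (hν : ∀ x, 0 ≤ ν x) (hν1 : ∑ x, ν x = 1) (hq : 1 ≤ q) (f : α → ℝ) :
    |expect ν f| ^ q ≤ expect ν (fun x => |f x| ^ q) := by
  have habs : |expect ν f| ≤ expect ν (fun x => |f x|) :=
    (Finset.abs_sum_le_sum_abs _ _).trans_eq <| Finset.sum_congr rfl fun x _ => by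
      rw [abs_mul, abs_of_nonneg (hν x)]
  exact (Real.rpow_le_rpow (abs_nonneg _) habs (by linarith)).trans <|
    Real.rpow_arith_mean_le_arith_mean_rpow _ _ _ (fun x _ => hν x) hν1
      (fun x _ => abs_nonneg _) hq

lemma pnorm_nonneg (hν : ∀ x, 0 ≤ ν x) : 0 ≤ pnorm ν q f :=
  Real.rpow_nonneg (Finset.sum_nonneg fun x _ =>
    mul_nonneg (hν x) (Real.rpow_nonneg (abs_nonneg _) _)) _

lemma pnorm_rpow (hν : ∀ x, 0 ≤ ν x) (hq : q ≠ 0) :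
    pnorm ν q f ^ q = expect ν (fun x => |f x| ^ q) := by
  rw [pnorm, ← Real.rpow_mul (Finset.sum_nonneg fun x _ =>
      mul_nonneg (hν x) (Real.rpow_nonneg (abs_nonneg _) _)), one_div_mul_cancel hq,
    Real.rpow_one]
  rfl

lemma pnorm_le_mul_of_expect_le (hν : ∀ x, 0 ≤ ν x) (hq : 0 < q) {γ : ℝ} (hγ : 0 ≤ γ)
    (h : expect ν (fun x => |f x| ^ q) ≤ γ ^ q * expect ν (fun x => |g x| ^ q)) :
    pnorm ν q f ≤ γ * pnorm ν q g := by
  rw [← Real.rpow_le_rpow_iff (pnorm_nonneg hν) (mul_nonneg hγ (pnorm_nonneg hν)) hq,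
    Real.mul_rpow hγ (pnorm_nonneg hν), pnorm_rpow hν hq.ne', pnorm_rpow hν hq.ne']
  exact h

lemma pnorm_congr_of_ne_zero (h : ∀ x, ν x ≠ 0 → f x = g x) : pnorm ν q f = pnorm ν q g := by
  unfold pnorm
  congr 1
  exact expect_congr_of_ne_zero (f := fun x => |f x| ^ q) fun x hx => by rw [h x hx]

lemma pnorm_zero (hq : q ≠ 0) : pnorm ν q (fun _ => 0) = 0 := by
  simp [pnorm, Real.zero_rpow hq, Real.zero_rpow (inv_ne_zero hq)]

lemma pnorm_eq_zero_of_ne_zero (hq : q ≠ 0) (h : ∀ x, ν x ≠ 0 → f x = 0) : pnorm ν q f = 0 :=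
  (pnorm_congr_of_ne_zero h).trans (pnorm_zero hq)

lemma pnorm_const_mul (hν : ∀ x, 0 ≤ ν x) (hq : 0 < q) (c : ℝ) (f : α → ℝ) :
    pnorm ν q (fun x => c * f x) = |c| * pnorm ν q f := by
  rw [← Real.rpow_left_inj (pnorm_nonneg hν) (mul_nonneg (abs_nonneg c) (pnorm_nonneg hν))
      hq.ne', Real.mul_rpow (abs_nonneg c) (pnorm_nonneg hν), pnorm_rpow hν hq.ne',
    pnorm_rpow hν hq.ne', ← expect_const_mul]
  congr 1
  funext x
  rw [abs_mul, Real.mul_rpow (abs_nonneg c) (abs_nonneg _)]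

lemma pnorm_add_le (hν : ∀ x, 0 ≤ ν x) (hq : 1 ≤ q) (f g : α → ℝ) :
    pnorm ν q (fun x => f x + g x) ≤ pnorm ν q f + pnorm ν q g := by
  have hq0 : q ≠ 0 := by positivity
  -- Minkowski for the unweighted vectors `ν ^ (1 / q) * f`
  have hweight : ∀ h : α → ℝ, pnorm ν q h = (∑ x, |ν x ^ (1 / q) * h x| ^ q) ^ (1 / q) := by
    intro h
    refine congrArg (· ^ (1 / q)) (Finset.sum_congr rfl fun x _ => ?_)
    rw [abs_mul, Real.mul_rpow (abs_nonneg _) (abs_nonneg _),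
      abs_of_nonneg (Real.rpow_nonneg (hν x) _), ← Real.rpow_mul (hν x),
      one_div_mul_cancel hq0, Real.rpow_one]
  simp only [hweight, mul_add]
  exact Real.Lp_add_le Finset.univ _ _ hq

lemma pnorm_sub_le (hν : ∀ x, 0 ≤ ν x) (hq : 1 ≤ q) (f g : α → ℝ) :
    pnorm ν q (fun x => f x - g x) ≤ pnorm ν q f + pnorm ν q g := by
  have hneg : pnorm ν q (fun x => -1 * g x) = pnorm ν q g := by
    rw [pnorm_const_mul hν (by positivity), abs_neg, abs_one, one_mul]
  simpa only [sub_eq_add_neg, neg_one_mul, ← hneg] using pnorm_add_le hν hq f (fun x => -1 * g x)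

lemma pnorm_sum_le (hν : ∀ x, 0 ≤ ν x) (hq : 1 ≤ q) {ι : Type*} (s : Finset ι)
    (F : ι → α → ℝ) :
    pnorm ν q (fun x => ∑ u ∈ s, F u x) ≤ ∑ u ∈ s, pnorm ν q (F u) := by
  classical
  induction s using Finset.induction_on with
  | empty => simp [pnorm_zero (ν := ν) (by positivity : q ≠ 0)]
  | insert a s ha ih =>
    simp only [Finset.sum_insert ha]
    exact (pnorm_add_le hν hq _ _).trans (by gcongr)

end WeightedNorm

section ConditionalExpectation

variable {d : ℕ} {Ω : Type} [Fintype Ω] [DecidableEq Ω] {μ : (Fin d → Ω) → ℝ}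
  {B T : Finset (Fin d)}

noncomputable def linkMass (μ : (Fin d → Ω) → ℝ) (T : Finset (Fin d)) (z : Fin d → Ω) : ℝ :=
  ∑ y, if ∀ i ∈ T, y i = z i then μ y else 0

lemma condMeasure_apply (z y : Fin d → Ω) :
    condMeasure μ T z y = (if ∀ i ∈ T, y i = z i then μ y else 0) / linkMass μ T z :=
  rfl

lemma linkMass_pos (hμ : ∀ x, 0 ≤ μ x) {z : Fin d → Ω} (hz : μ z ≠ 0) :
    0 < linkMass μ T z := by
  refine (hμ z).lt_of_ne' hz |>.trans_le ?_
  simpa [linkMass] using Finset.single_le_sum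
    (f := fun y => if ∀ i ∈ T, y i = z i then μ y else 0)
    (fun y _ => by split_ifs <;> simp [hμ y]) (Finset.mem_univ z)

lemma condMeasure_nonneg (hμ : ∀ x, 0 ≤ μ x) (z y : Fin d → Ω) : 0 ≤ condMeasure μ T z y :=
  div_nonneg (by split_ifs <;> simp [hμ y])
    (Finset.sum_nonneg fun y _ => by split_ifs <;> simp [hμ y])

lemma sum_condMeasure (hμ : ∀ x, 0 ≤ μ x) {z : Fin d → Ω} (hz : μ z ≠ 0) :
    ∑ y, condMeasure μ T z y = 1 := by
  simp only [condMeasure_apply, ← Finset.sum_div]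
  exact div_self (linkMass_pos hμ hz).ne'

lemma linkMass_congr {z z' : Fin d → Ω} (h : ∀ i ∈ T, z i = z' i) :
    linkMass μ T z = linkMass μ T z' := by
  have hiff : ∀ y : Fin d → Ω, (∀ i ∈ T, y i = z i) ↔ ∀ i ∈ T, y i = z' i :=
    fun y => forall₂_congr fun i hi => by rw [h i hi]
  simp only [linkMass, hiff]

lemma condMeasure_congr {z z' : Fin d → Ω} (h : ∀ i ∈ T, z i = z' i) :
    condMeasure μ T z = condMeasure μ T z' := by
  have hiff : ∀ y : Fin d → Ω, (∀ i ∈ T, y i = z i) ↔ ∀ i ∈ T, y i = z' i :=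
    fun y => forall₂_congr fun i hi => by rw [h i hi]
  funext y
  simp only [condMeasure_apply, linkMass_congr h, hiff]

lemma eq_of_condMeasure_ne_zero {z y : Fin d → Ω} (h : condMeasure μ T z y ≠ 0) :
    ∀ i ∈ T, y i = z i := by
  by_contra hy
  simp [condMeasure_apply, hy] at h

lemma projE_eq_expect (f : (Fin d → Ω) → ℝ) (z : Fin d → Ω) :
    projE μ T f z = expect (condMeasure μ T z) f := by
  simp only [projE, _root_.expect, condMeasure_apply, linkMass, Finset.sum_div]
  refine Finset.sum_congr rfl fun y _ => ?_
  split_ifs <;> ring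

lemma projE_dependsOn (f : (Fin d → Ω) → ℝ) : DependsOn (projE μ T f) T := fun z z' h => by
  simp only [projE_eq_expect, condMeasure_congr h]

lemma projE_of_dependsOn (hμ : ∀ x, 0 ≤ μ x) {f : (Fin d → Ω) → ℝ} (hf : DependsOn f T)
    {z : Fin d → Ω} (hz : μ z ≠ 0) : projE μ T f z = f z := by
  rw [projE_eq_expect, expect_congr_of_ne_zero (g := fun _ => f z)
    fun y hy => hf (eq_of_condMeasure_ne_zero hy), _root_.expect, ← Finset.sum_mul,
    sum_condMeasure hμ hz, one_mul]

lemma projE_sub (f g : (Fin d → Ω) → ℝ) (z : Fin d → Ω) :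
    projE μ T (fun y => f y - g y) z = projE μ T f z - projE μ T g z := by
  simp only [projE_eq_expect, _root_.expect, mul_sub, Finset.sum_sub_distrib]

lemma projE_const_mul (c : ℝ) (f : (Fin d → Ω) → ℝ) (z : Fin d → Ω) :
    projE μ T (fun y => c * f y) z = c * projE μ T f z := by
  simp only [projE_eq_expect, expect_const_mul]

lemma projE_sum {ι : Type*} (s : Finset ι) (F : ι → (Fin d → Ω) → ℝ) (z : Fin d → Ω) :
    projE μ T (fun y => ∑ u ∈ s, F u y) z = ∑ u ∈ s, projE μ T (F u) z := by
  simp only [projE_eq_expect, _root_.expect, Finset.mul_sum]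
  exact Finset.sum_comm

lemma mul_condMeasure_comm (y w : Fin d → Ω) :
    μ y * condMeasure μ B y w = μ w * condMeasure μ B w y := by
  by_cases h : ∀ i ∈ B, w i = y i
  · have h' : ∀ i ∈ B, y i = w i := fun i hi => (h i hi).symm
    rw [condMeasure_apply, condMeasure_apply, if_pos h, if_pos h', linkMass_congr h']
    ring
  · have h' : ¬ ∀ i ∈ B, y i = w i := fun h' => h fun i hi => (h' i hi).symm
    rw [condMeasure_apply, condMeasure_apply, if_neg h, if_neg h']
    ring

end ConditionalExpectation

section Tower

variable {d : ℕ} {Ω : Type} [Fintype Ω] [DecidableEq Ω] {μ : (Fin d → Ω) → ℝ}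
  {A B T : Finset (Fin d)}

lemma expect_mul_projE (hμ : ∀ x, 0 ≤ μ x) {φ : (Fin d → Ω) → ℝ} (hφ : DependsOn φ B)
    (f : (Fin d → Ω) → ℝ) :
    expect μ (fun y => φ y * projE μ B f y) = expect μ (fun y => φ y * f y) :=
  calc expect μ (fun y => φ y * projE μ B f y)
      = expect μ (fun w => f w * projE μ B φ w) := by
        simp only [_root_.expect, projE_eq_expect, Finset.mul_sum]
        rw [Finset.sum_comm]
        refine Finset.sum_congr rfl fun w _ => Finset.sum_congr rfl fun y _ => ?_
        linear_combination (φ y * f w) * mul_condMeasure_comm (μ := μ) (B := B) y w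
    _ = expect μ (fun y => φ y * f y) := expect_congr_of_ne_zero fun w hw => by
        rw [projE_of_dependsOn hμ hφ hw, mul_comm]

lemma expect_projE (hμ : ∀ x, 0 ≤ μ x) (f : (Fin d → Ω) → ℝ) :
    expect μ (projE μ T f) = expect μ f := by
  simpa only [one_mul] using
    expect_mul_projE hμ ((dependsOn_const (1 : ℝ)).mono (Set.empty_subset _)) f

lemma expect_condMeasure (z : Fin d → Ω) (f : (Fin d → Ω) → ℝ) :
    expect (condMeasure μ T z) f
      = expect μ (fun y => (if ∀ i ∈ T, y i = z i then 1 else 0) * f y) / linkMass μ T z := by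
  simp only [_root_.expect, condMeasure_apply, Finset.sum_div]
  refine Finset.sum_congr rfl fun y _ => ?_
  split_ifs <;> ring

lemma projE_projE (hμ : ∀ x, 0 ≤ μ x) (hAB : A ⊆ B) (f : (Fin d → Ω) → ℝ) (z : Fin d → Ω) :
    projE μ A (projE μ B f) z = projE μ A f z := by
  have hφ : DependsOn (fun y : Fin d → Ω => if ∀ i ∈ A, y i = z i then (1 : ℝ) else 0) B :=
    fun y y' h => by
      simp only [show (∀ i ∈ A, y i = z i) ↔ ∀ i ∈ A, y' i = z i from
        forall₂_congr fun i hi => by rw [h i (hAB hi)]]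
  rw [projE_eq_expect, projE_eq_expect, expect_condMeasure, expect_condMeasure,
    expect_mul_projE hμ hφ]

lemma pnorm_projE_le (hμ : ∀ x, 0 ≤ μ x) {q : ℝ} (hq : 1 ≤ q) (f : (Fin d → Ω) → ℝ) :
    pnorm μ q (projE μ T f) ≤ pnorm μ q f := by
  have hJensen : expect μ (fun x => |projE μ T f x| ^ q)
      ≤ expect μ (projE μ T fun x => |f x| ^ q) :=
    expect_mono_of_ne_zero hμ fun x hx => by
      simpa only [projE_eq_expect] using
        abs_expect_rpow_le (condMeasure_nonneg hμ x) (sum_condMeasure hμ hx) hq f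
  simpa using pnorm_le_mul_of_expect_le hμ (by positivity) zero_le_one
    (by simpa [expect_projE hμ] using hJensen)

end Tower

lemma exists_eq_on_link_of_dependsOn {d : ℕ} {Ω : Type*} {R : Finset (Fin d)} {j : Fin d}
    (hj : j ∉ R) {g : (Fin d → Ω) → ℝ} (hg : DependsOn g ↑(insert j R)) (z : Fin d → Ω) :
    ∃ g' : (Fin d → Ω) → ℝ, (∀ x y : Fin d → Ω, x j = y j → g' x = g' y) ∧
      ∀ y, (∀ k ∈ R, y k = z k) → g' y = g y := by
  refine ⟨fun y => g (R.piecewise z y), fun x y hxy => hg fun k hk => ?_,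
    fun y hy => hg fun k hk => ?_⟩
  all_goals rcases Finset.mem_insert.mp hk with rfl | hk
  · simp [Finset.piecewise_eq_of_notMem _ _ _ hj, hxy]
  · simp [Finset.piecewise_eq_of_mem _ _ _ hk]
  · simp [Finset.piecewise_eq_of_notMem _ _ _ hj]
  · rw [Finset.piecewise_eq_of_mem _ _ _ hk, hy k hk]

section Link

variable {d : ℕ} {Ω : Type} [Fintype Ω] [DecidableEq Ω] {μ : (Fin d → Ω) → ℝ}
  {A R : Finset (Fin d)} {z x : Fin d → Ω}

lemma condMeasure_condMeasure (hμ : ∀ x, 0 ≤ μ x) (hz : μ z ≠ 0) (hx : ∀ k ∈ R, x k = z k) :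
    condMeasure (condMeasure μ R z) A x = condMeasure μ (A ∪ R) x := by
  have hiff : ∀ y : Fin d → Ω, ((∀ i ∈ A, y i = x i) ∧ ∀ i ∈ R, y i = z i)
      ↔ ∀ i ∈ A ∪ R, y i = x i := fun y => by
    simp only [Finset.mem_union, or_imp, forall_and]
    exact and_congr_right' (forall₂_congr fun i hi => by rw [hx i hi])
  have hpt : ∀ y, (if ∀ i ∈ A, y i = x i then condMeasure μ R z y else 0)
      = (if ∀ i ∈ A ∪ R, y i = x i then μ y else 0) / linkMass μ R z := fun y => by
    rw [condMeasure_apply]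
    by_cases hAR : ∀ i ∈ A ∪ R, y i = x i
    · obtain ⟨hA, hR⟩ := (hiff y).mpr hAR
      rw [if_pos hA, if_pos hR, if_pos hAR]
    · rw [if_neg hAR, zero_div]
      by_cases hA : ∀ i ∈ A, y i = x i
      · rw [if_pos hA, if_neg fun hR => hAR ((hiff y).mp ⟨hA, hR⟩), zero_div]
      · rw [if_neg hA]
  have hmass : linkMass (condMeasure μ R z) A x = linkMass μ (A ∪ R) x / linkMass μ R z := by
    rw [linkMass, Finset.sum_congr rfl fun y _ => hpt y, ← Finset.sum_div]
    rfl
  funext y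
  show (if ∀ i ∈ A, y i = x i then condMeasure μ R z y else 0) / linkMass _ A x = _
  rw [hpt, hmass, div_div_div_cancel_right₀ (linkMass_pos hμ hz).ne']
  rfl

lemma projE_condMeasure (hμ : ∀ x, 0 ≤ μ x) (hz : μ z ≠ 0) (hx : ∀ k ∈ R, x k = z k)
    {g g' : (Fin d → Ω) → ℝ} (hg : ∀ y, (∀ k ∈ R, y k = z k) → g' y = g y) :
    projE (condMeasure μ R z) A g' x = projE μ (A ∪ R) g x := by
  rw [projE_eq_expect, projE_eq_expect, condMeasure_condMeasure hμ hz hx]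
  refine expect_congr_of_ne_zero fun y hy => hg y fun k hk => ?_
  rw [eq_of_condMeasure_ne_zero hy k (Finset.mem_union_right A hk), hx k hk]

lemma projE_abs_projE_insert_sub_rpow_le (hμ : ∀ x, 0 ≤ μ x) {q γ : ℝ} (hq : 0 < q)
    (hγ : 0 ≤ γ) (hX : IsQGammaProduct μ q γ) {i j : Fin d} (hi : i ∉ R) (hj : j ∉ R)
    (hij : i ≠ j) {g : (Fin d → Ω) → ℝ} (hg : DependsOn g ↑(insert j R)) (hz : μ z ≠ 0) :
    projE μ R (fun x => |projE μ (insert i R) g x - projE μ R g x| ^ q) z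
      ≤ γ ^ q * projE μ R (fun x => |g x| ^ q) z := by
  have hcard : R.card + 2 ≤ d := by
    have := Finset.card_le_univ (insert i (insert j R))
    rwa [Finset.card_insert_of_notMem (by simp [hi, hij]), Finset.card_insert_of_notMem hj,
      Fintype.card_fin] at this
  obtain ⟨g', hg'j, hg'⟩ := exists_eq_on_link_of_dependsOn hj hg z
  set ν := condMeasure μ R z
  have hν : ∀ x, 0 ≤ ν x := condMeasure_nonneg hμ z
  have hmean : expect ν g' = projE μ R g z := by
    rw [projE_eq_expect]
    exact expect_congr_of_ne_zero fun y hy => hg' y (eq_of_condMeasure_ne_zero hy)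
  calc projE μ R (fun x => |projE μ (insert i R) g x - projE μ R g x| ^ q) z
      = pnorm ν q (fun x => projE ν {i} g' x - expect ν g') ^ q := by
        rw [pnorm_rpow hν hq.ne', projE_eq_expect]
        refine expect_congr_of_ne_zero fun y hy => ?_
        have hy := eq_of_condMeasure_ne_zero hy
        rw [projE_condMeasure hμ hz hy hg', hmean, projE_dependsOn g hy, Finset.insert_eq]
    _ ≤ (γ * pnorm ν q g') ^ q :=
        Real.rpow_le_rpow (pnorm_nonneg hν) (hX R z hcard j i hj hi hij.symm g' hg'j) hq.le
    _ = γ ^ q * projE μ R (fun x => |g x| ^ q) z := by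
        rw [Real.mul_rpow hγ (pnorm_nonneg hν), pnorm_rpow hν hq.ne', projE_eq_expect]
        exact congrArg _ <| expect_congr_of_ne_zero fun y hy => by
          rw [hg' y (eq_of_condMeasure_ne_zero hy)]

lemma pnorm_projE_insert_sub_le (hμ : ∀ x, 0 ≤ μ x) {q γ : ℝ} (hq : 0 < q) (hγ : 0 ≤ γ)
    (hX : IsQGammaProduct μ q γ) {i j : Fin d} (hi : i ∉ R) (hj : j ∉ R) (hij : i ≠ j)
    {g : (Fin d → Ω) → ℝ} (hg : DependsOn g ↑(insert j R)) :
    pnorm μ q (fun x => projE μ (insert i R) g x - projE μ R g x) ≤ γ * pnorm μ q g := by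
  refine pnorm_le_mul_of_expect_le hμ hq hγ ?_
  calc expect μ (fun x => |projE μ (insert i R) g x - projE μ R g x| ^ q)
      = expect μ (projE μ R fun x => |projE μ (insert i R) g x - projE μ R g x| ^ q) :=
        (expect_projE hμ _).symm
    _ ≤ expect μ (fun z => γ ^ q * projE μ R (fun x => |g x| ^ q) z) :=
        expect_mono_of_ne_zero hμ fun z hz =>
          projE_abs_projE_insert_sub_rpow_le hμ hq hγ hX hi hj hij hg hz
    _ = γ ^ q * expect μ (fun x => |g x| ^ q) := by rw [expect_const_mul, expect_projE hμ]

end Link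

section EfronStein

variable {d : ℕ} {Ω : Type} [Fintype Ω] [DecidableEq Ω] {μ : (Fin d → Ω) → ℝ} {q γ : ℝ}
  {S T U : Finset (Fin d)} {j : Fin d}

lemma pnorm_projE_union_sub_le (hμ : ∀ x, 0 ≤ μ x) (hq : 1 ≤ q) (hγ : 0 ≤ γ)
    (hX : IsQGammaProduct μ q γ) (hjU : j ∉ U) {g : (Fin d → Ω) → ℝ}
    (hg : DependsOn g ↑(insert j U)) {V : Finset (Fin d)} (hjV : j ∉ V) :
    pnorm μ q (fun x => projE μ (U ∪ V) g x - projE μ U g x) ≤ V.card * γ * pnorm μ q g := by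
  induction V using Finset.induction_on with
  | empty => simp [pnorm_zero (by positivity : q ≠ 0)]
  | insert i V hiV ih =>
    have hjV' : j ∉ V := fun h => hjV (Finset.mem_insert_of_mem h)
    have hij : i ≠ j := fun h => hjV (h ▸ Finset.mem_insert_self i V)
    have hgnorm := pnorm_nonneg (q := q) (f := g) hμ
    rw [Finset.union_insert, Finset.card_insert_of_notMem hiV, Nat.cast_succ]
    by_cases hiUV : i ∈ U ∪ V
    · rw [Finset.insert_eq_of_mem hiUV]
      exact (ih hjV').trans (by nlinarith)
    · have hstep := pnorm_projE_insert_sub_le hμ (by positivity) hγ hX hiUV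
        (by simp [hjU, hjV']) hij (hg.mono (by simp [Set.insert_subset_insert]))
      calc pnorm μ q (fun x => projE μ (insert i (U ∪ V)) g x - projE μ U g x)
          ≤ pnorm μ q (fun x => projE μ (insert i (U ∪ V)) g x - projE μ (U ∪ V) g x)
            + pnorm μ q (fun x => projE μ (U ∪ V) g x - projE μ U g x) := by
            simpa only [sub_add_sub_cancel] using pnorm_add_le hμ hq
              (fun x => projE μ (insert i (U ∪ V)) g x - projE μ (U ∪ V) g x)
              (fun x => projE μ (U ∪ V) g x - projE μ U g x)
        _ ≤ γ * pnorm μ q g + V.card * γ * pnorm μ q g := add_le_add hstep (ih hjV')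
        _ = (V.card + 1) * γ * pnorm μ q g := by ring

lemma esComp_dependsOn (f : (Fin d → Ω) → ℝ) : DependsOn (esComp μ S f) S := fun x y h =>
  Finset.sum_congr rfl fun T hT => by
    rw [projE_dependsOn f fun i hi => h i (Finset.mem_powerset.mp hT hi)]

lemma esComp_insert {s : Finset (Fin d)} (hj : j ∉ s) (f : (Fin d → Ω) → ℝ) :
    esComp μ (insert j s) f = fun x => ∑ U ∈ s.powerset,
      (-1 : ℝ) ^ (s.card - U.card) * (projE μ (insert j U) f x - projE μ U f x) := by
  funext x
  rw [esComp, Finset.sum_powerset_insert hj, ← Finset.sum_add_distrib]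
  refine Finset.sum_congr rfl fun U hU => ?_
  have hUs := Finset.card_le_card (Finset.mem_powerset.mp hU)
  rw [Finset.card_insert_of_notMem hj,
    Finset.card_insert_of_notMem fun h => hj (Finset.mem_powerset.mp hU h),
    Nat.add_sub_add_right, Nat.sub_add_comm hUs, pow_succ]
  ring

lemma pnorm_projE_projE_insert_sub_le (hμ : ∀ x, 0 ≤ μ x) (hq : 1 ≤ q) (hγ : 0 ≤ γ)
    (hX : IsQGammaProduct μ q γ) (hjT : j ∉ T) (hjU : j ∉ U) (f : (Fin d → Ω) → ℝ) :
    pnorm μ q (projE μ T fun y => projE μ (insert j U) f y - projE μ U f y)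
      ≤ 2 * T.card * γ * pnorm μ q f := by
  set g := fun y => projE μ (insert j U) f y - projE μ U f y
  have hg : DependsOn g ↑(insert j U) := fun y y' h => by
    simp only [g, projE_dependsOn f h,
      projE_dependsOn f fun i hi => h i (Finset.mem_insert_of_mem hi)]
  have hgU : ∀ x, projE μ U g x = 0 := fun x => by
    simp only [g, projE_sub, projE_projE hμ (Finset.subset_insert j U),
      projE_projE hμ subset_rfl, sub_self]
  have hg2 : pnorm μ q g ≤ 2 * pnorm μ q f := by
    linarith [pnorm_sub_le hμ hq (projE μ (insert j U) f) (projE μ U f),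
      pnorm_projE_le (T := insert j U) hμ hq f, pnorm_projE_le (T := U) hμ hq f]
  calc pnorm μ q (projE μ T g)
      = pnorm μ q (projE μ T (projE μ (U ∪ T) g)) := by
        exact congrArg _ <| funext fun x => (projE_projE hμ Finset.subset_union_right g x).symm
    _ ≤ pnorm μ q (fun x => projE μ (U ∪ T) g x - projE μ U g x) := by
        simpa only [hgU, sub_zero] using pnorm_projE_le hμ hq _
    _ ≤ T.card * γ * pnorm μ q g := pnorm_projE_union_sub_le hμ hq hγ hX hjU hg hjT
    _ ≤ T.card * γ * (2 * pnorm μ q f) := by gcongr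
    _ = 2 * T.card * γ * pnorm μ q f := by ring

lemma pnorm_projE_esComp_le (hμ : ∀ x, 0 ≤ μ x) (hq : 1 ≤ q) (hγ : 0 ≤ γ)
    (hX : IsQGammaProduct μ q γ) (hST : ¬ S ⊆ T) (f : (Fin d → Ω) → ℝ) :
    pnorm μ q (projE μ T (esComp μ S f)) ≤ 2 ^ S.card * T.card * γ * pnorm μ q f := by
  obtain ⟨j, hjS, hjT⟩ := Finset.not_subset.mp hST
  set s := S.erase j
  have hjs : j ∉ s := Finset.notMem_erase j S
  have hS : insert j s = S := Finset.insert_erase hjS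
  calc pnorm μ q (projE μ T (esComp μ S f))
      = pnorm μ q (fun x => ∑ U ∈ s.powerset, (-1 : ℝ) ^ (s.card - U.card)
          * projE μ T (fun y => projE μ (insert j U) f y - projE μ U f y) x) := by
        refine congrArg _ <| funext fun x => ?_
        rw [← hS, esComp_insert hjs, projE_sum]
        simp only [projE_const_mul]
    _ ≤ ∑ U ∈ s.powerset, 2 * T.card * γ * pnorm μ q f := by
        refine (pnorm_sum_le hμ hq _ _).trans (Finset.sum_le_sum fun U hU => ?_)
        rw [pnorm_const_mul hμ (by positivity), abs_pow, abs_neg, abs_one, one_pow, one_mul]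
        exact pnorm_projE_projE_insert_sub_le hμ hq hγ hX hjT
          (fun h => hjs (Finset.mem_powerset.mp hU h)) f
    _ = 2 ^ S.card * T.card * γ * pnorm μ q f := by
        rw [Finset.sum_const, Finset.card_powerset, nsmul_eq_mul, ← hS,
          Finset.card_insert_of_notMem hjs]
        push_cast
        ring

end EfronStein

lemma pnorm_projE_esComp_sub_le {d : ℕ} {Ω : Type} [Fintype Ω] [DecidableEq Ω]
    {μ : (Fin d → Ω) → ℝ} {q γ : ℝ} (hμ : ∀ x, 0 ≤ μ x) (hq : 1 ≤ q) (hγ : 0 ≤ γ)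
    (hX : IsQGammaProduct μ q γ) (S T : Finset (Fin d)) (f : (Fin d → Ω) → ℝ) :
    pnorm μ q (fun x => projE μ T (esComp μ S f) x - (if S ⊆ T then 1 else 0) * esComp μ S f x)
      ≤ 2 ^ (2 * d) * γ * pnorm μ q f := by
  have hbound : 0 ≤ 2 ^ (2 * d) * γ * pnorm μ q f := by
    have := pnorm_nonneg (q := q) (f := f) hμ
    positivity
  by_cases hST : S ⊆ T
  · refine (pnorm_eq_zero_of_ne_zero (by positivity) fun x hx => ?_).trans_le hbound
    rw [projE_of_dependsOn hμ ((esComp_dependsOn f).mono (Finset.coe_subset.mpr hST)) hx]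
    simp [hST]
  · have hcard : (2 : ℝ) ^ S.card * T.card ≤ 2 ^ (2 * d) := by
      have hS : S.card ≤ d := by simpa using Finset.card_le_univ S
      have hT : (T.card : ℝ) ≤ 2 ^ d := by
        exact_mod_cast ((Finset.card_le_univ T).trans_eq (Fintype.card_fin d)).trans
          Nat.lt_two_pow_self.le
      calc (2 : ℝ) ^ S.card * T.card ≤ 2 ^ d * 2 ^ d :=
            mul_le_mul (pow_le_pow_right₀ one_le_two hS) hT (by positivity) (by positivity)
        _ = 2 ^ (2 * d) := by ring
    simp only [hST, if_false, zero_mul, sub_zero]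
    refine (pnorm_projE_esComp_le hμ hq hγ hX hST f).trans ?_
    have := pnorm_nonneg (q := q) (f := f) hμ
    gcongr

/-- approximate eigenvector property. There is a universal
constant `C` such that on any `(q,γ)`-product, for `M = ∑_{T⊆[d]} α_T E_T`:
`‖M f^{=S} − λ_S f^{=S}‖_q ≤ |α|₁ · 2^{C·d} · γ · ‖f‖_q`, where
`λ_S = ∑_{T ⊇ S} α_T` and `|α|₁ = ∑_T |α_T|`. -/
theorem approximate_eigenvector :
    ∃ C : ℝ, 0 < C ∧
      ∀ (d : ℕ) (Ω : Type) [Fintype Ω] [DecidableEq Ω]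
        (μ : (Fin d → Ω) → ℝ), (∀ x, 0 ≤ μ x) → (∑ x, μ x = 1) →
        ∀ q γ : ℝ, 1 < q → 0 ≤ γ → IsQGammaProduct μ q γ →
        ∀ (α : Finset (Fin d) → ℝ) (S : Finset (Fin d)) (f : (Fin d → Ω) → ℝ),
          pnorm μ q (fun x =>
              (∑ T ∈ (univ : Finset (Fin d)).powerset, α T * projE μ T (esComp μ S f) x)
                - (∑ T ∈ (univ : Finset (Fin d)).powerset.filter (fun T => S ⊆ T), α T)
                    * esComp μ S f x)
            ≤ (∑ T ∈ (univ : Finset (Fin d)).powerset, |α T|) * 2 ^ (C * d) * γ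
                * pnorm μ q f := by
  refine ⟨2, two_pos, fun d Ω _ _ μ hμ _ q γ hq hγ hX α S f => ?_⟩
  have hdecomp : ∀ x, (∑ T ∈ (univ : Finset (Fin d)).powerset, α T * projE μ T (esComp μ S f) x)
      - (∑ T ∈ (univ : Finset (Fin d)).powerset.filter (fun T => S ⊆ T), α T) * esComp μ S f x
      = ∑ T ∈ (univ : Finset (Fin d)).powerset, α T
          * (projE μ T (esComp μ S f) x - (if S ⊆ T then 1 else 0) * esComp μ S f x) := by
    intro x
    rw [Finset.sum_filter, Finset.sum_mul, ← Finset.sum_sub_distrib]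
    exact Finset.sum_congr rfl fun T _ => by split_ifs <;> ring
  simp only [hdecomp]
  calc _ ≤ ∑ T ∈ (univ : Finset (Fin d)).powerset, |α T| * pnorm μ q (fun x =>
          projE μ T (esComp μ S f) x - (if S ⊆ T then 1 else 0) * esComp μ S f x) := by
        refine (pnorm_sum_le hμ hq.le _ fun T x => α T * _).trans_eq ?_
        simp only [pnorm_const_mul hμ (zero_lt_one.trans hq)]
    _ ≤ ∑ T ∈ (univ : Finset (Fin d)).powerset, |α T| * (2 ^ (2 * d) * γ * pnorm μ q f) :=
        Finset.sum_le_sum fun T _ => mul_le_mul_of_nonneg_left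
          (pnorm_projE_esComp_sub_le hμ hq.le hγ hX S T f) (abs_nonneg _)
    _ = _ := by
        rw [← Finset.sum_mul, ← Real.rpow_natCast, Nat.cast_mul, Nat.cast_ofNat]
        ring
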